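/- Let q ∈ (0,1] and let n be a nonnegative integer. The family of triangular q-Bernstein polynomials {B^n_{ijk}(u,v) : i, j, k ≥ 0, i + j + k = n}, regarded as elements of the real vector space of bivariate real polynomials of total degree at most n, is a basis of that space (equivalently, it is linearly independent and its span equals the space of bivariate polynomials of total degree ≤ n). -/

import Mathlib

open Finset

/-- The q-integer [r] = 1 + q + ... + q^(r-1). -/
noncomputable def qInt (q : ℝ) (r : ℕ) : ℝ := ∑ s ∈ Finset.range r, q ^ s

/-- The q-factorial [r]!. -/
noncomputable def qFact (q : ℝ) : ℕ → ℝ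
  | 0 => 1
  | r + 1 => qInt q (r + 1) * qFact q r

/-- The q-binomial coefficient [i choose j]_q (zero unless i ≥ j ≥ 0). -/
noncomputable def qBinom (q : ℝ) (i j : ℕ) : ℝ :=
  if j ≤ i then qFact q i / (qFact q j * qFact q (i - j)) else 0

/-- The q-binomial coefficient with integer indices, zero unless i ≥ j ≥ 0. -/
noncomputable def qBinomZ (q : ℝ) (i j : ℤ) : ℝ :=
  if 0 ≤ j ∧ j ≤ i then qFact q i.toNat / (qFact q j.toNat * qFact q (i - j).toNat) else 0

/-- The triangular q-Bernstein polynomial B^n_{ijk}(u,v)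
    (meaningful for i + j + k = n). -/
noncomputable def triB (q : ℝ) (n i j k : ℕ) (u v : ℝ) : ℝ :=
  qBinom q n k * (Nat.choose (i + j) i : ℝ) * u ^ i * v ^ j *
    ∏ s ∈ Finset.range k, (1 - q ^ s * u - q ^ s * v)

/-- The triangular q-Bernstein polynomial with integer indices; by convention it is
    zero whenever any of the indices is negative. -/
noncomputable def triBZ (q : ℝ) (n : ℕ) (i j k : ℤ) (u v : ℝ) : ℝ :=
  if 0 ≤ i ∧ 0 ≤ j ∧ 0 ≤ k then triB q n i.toNat j.toNat k.toNat u v else 0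

/-- The classical triangular Bernstein polynomial b^n_{ijk}(u,v). -/
noncomputable def triBern (n i j k : ℕ) (u v : ℝ) : ℝ :=
  (Nat.factorial n : ℝ) /
      ((Nat.factorial i : ℝ) * (Nat.factorial j : ℝ) * (Nat.factorial k : ℝ)) *
    u ^ i * v ^ j * (1 - u - v) ^ k

/-- The set of triples (i, j, k) of nonnegative integers with i + j + k = n. -/
def simplex (n : ℕ) : Finset (ℕ × ℕ × ℕ) :=
  (Finset.range (n + 1) ×ˢ Finset.range (n + 1) ×ˢ Finset.range (n + 1)).filter
    (fun p => p.1 + p.2.1 + p.2.2 = n)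

/-- The triangular q-Bernstein polynomial as a bivariate polynomial. -/
noncomputable def triBP (q : ℝ) (n i j k : ℕ) : MvPolynomial (Fin 2) ℝ :=
  MvPolynomial.C (qBinom q n k * (Nat.choose (i + j) i : ℝ)) *
    MvPolynomial.X 0 ^ i * MvPolynomial.X 1 ^ j *
    ∏ s ∈ Finset.range k,
      (1 - MvPolynomial.C (q ^ s) * MvPolynomial.X 0 - MvPolynomial.C (q ^ s) * MvPolynomial.X 1)

/-! `triBP q n i j k` is a nonzero multiple (as `0 < q`) of `X₀^i X₁^j` times a polynomial with
constant term `1` and total degree at most `k`. Hence, modulo monomials of higher degree, it is a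
nonzero multiple of `X₀^i X₁^j`, and downward induction on the degree puts every monomial of
degree `≤ n` in the span of the family. The family has as many members as the space has
dimension, so it is also linearly independent. -/

lemma qFact_pos {q : ℝ} (hq : 0 < q) : ∀ r, 0 < qFact q r
  | 0 => one_pos
  | r + 1 => mul_pos (sum_pos (fun s _ => pow_pos hq s) ⟨0, by simp⟩) (qFact_pos hq r)

lemma qBinom_pos {q : ℝ} (hq : 0 < q) {i j : ℕ} (h : j ≤ i) : 0 < qBinom q i j := by
  rw [qBinom, if_pos h]
  exact div_pos (qFact_pos hq i) (mul_pos (qFact_pos hq j) (qFact_pos hq (i - j)))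

lemma Finsupp.degree_fin_two (μ : Fin 2 →₀ ℕ) : μ.degree = μ 0 + μ 1 := by
  rw [Finsupp.degree_eq_sum, Fin.sum_univ_two]

namespace MvPolynomial

variable {σ R : Type*} [CommRing R]

theorem restrictTotalDegree_le_of_monomial_mul_mem {M : Submodule R (MvPolynomial σ R)} {n : ℕ}
    (u : (σ →₀ ℕ) → MvPolynomial σ R) (hu_one : ∀ μ, constantCoeff (u μ) = 1)
    (hu_deg : ∀ μ, μ.degree ≤ n → μ.degree + (u μ).totalDegree ≤ n)
    (hM : ∀ μ, μ.degree ≤ n → monomial μ 1 * u μ ∈ M) :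
    restrictTotalDegree σ R n ≤ M := by
  classical
  -- `X^μ = X^μ u μ - X^μ (u μ - 1)`, and the monomials of `X^μ (u μ - 1)` have degree in
  -- `(μ.degree, n]`: strong induction on `n - μ.degree`.
  have hmono : ∀ d μ, μ.degree ≤ n → n - μ.degree = d → monomial μ (1 : R) ∈ M := by
    intro d
    induction d using Nat.strong_induction_on with
    | _ d ih =>
    intro μ hμ hd
    have htail : monomial μ 1 * (u μ - 1) ∈ M := by
      rw [(u μ - 1).as_sum, Finset.mul_sum]
      refine Submodule.sum_mem _ fun ν hν => ?_
      have hν0 : ν ≠ 0 := by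
        rintro rfl
        simp [← constantCoeff_eq, hu_one] at hν
      have hνu : ν ∈ (u μ).support := by
        rw [mem_support_iff, coeff_sub, coeff_one, if_neg (Ne.symm hν0), sub_zero] at hν
        exact mem_support_iff.mpr hν
      have hνpos : 0 < ν.degree := Nat.pos_of_ne_zero (by simpa [Finsupp.degree_eq_zero_iff])
      have hνle : ν.degree ≤ (u μ).totalDegree := le_totalDegree hνu
      have := hu_deg μ hμ
      rw [monomial_mul, one_mul, ← mul_one (coeff ν _), ← smul_eq_mul, ← smul_monomial]
      have hdeg : (μ + ν).degree = μ.degree + ν.degree := map_add _ _ _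
      exact M.smul_mem _ (ih _ (by omega) _ (by omega) rfl)
    have hsplit : monomial μ (1 : R) = monomial μ 1 * u μ - monomial μ 1 * (u μ - 1) := by ring
    exact hsplit ▸ M.sub_mem (hM μ hμ) htail
  rw [restrictTotalDegree, restrictSupport_eq_span, Submodule.span_le]
  rintro _ ⟨μ, hμ, rfl⟩
  exact hmono _ μ hμ rfl

lemma monomial_one_fin_two (μ : Fin 2 →₀ ℕ) :
    (monomial μ 1 : MvPolynomial (Fin 2) R) = X 0 ^ μ 0 * X 1 ^ μ 1 := by
  rw [monomial_eq, C_1, one_mul, Finsupp.prod_fintype _ _ fun _ => pow_zero _, Fin.prod_univ_two]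

lemma constantCoeff_prod_one_sub_C_mul_X (a : ℕ → R) (k : ℕ) :
    constantCoeff (∏ s ∈ range k, (1 - C (a s) * X 0 - C (a s) * X 1 : MvPolynomial (Fin 2) R)) =
      1 := by
  simp [map_prod]

lemma totalDegree_prod_one_sub_C_mul_X_le (a : ℕ → R) (k : ℕ) :
    (∏ s ∈ range k, (1 - C (a s) * X 0 - C (a s) * X 1 : MvPolynomial (Fin 2) R)).totalDegree ≤
      k := by
  have hlinear (s : ℕ) (i : Fin 2) : (C (a s) * X i : MvPolynomial (Fin 2) R).totalDegree ≤ 1 := by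
    rw [C_mul_X_eq_monomial]
    exact (totalDegree_monomial_le _ _).trans (by simp)
  refine (totalDegree_finsetProd _ _).trans ?_
  calc _ ≤ ∑ _s ∈ range k, 1 := sum_le_sum fun s _ =>
        (totalDegree_sub _ _).trans <| max_le ((totalDegree_sub _ _).trans <|
          max_le (by simp) (hlinear s 0)) (hlinear s 1)
    _ = k := by simp

end MvPolynomial

open MvPolynomial

lemma mem_simplex {n i j k : ℕ} : (i, j, k) ∈ simplex n ↔ i + j + k = n := by
  simp only [simplex, mem_filter, mem_product, mem_range]
  omega

lemma triBP_eq_smul (q : ℝ) (n i j k : ℕ) :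
    triBP q n i j k = (qBinom q n k * (i + j).choose i) •
      (X 0 ^ i * X 1 ^ j * ∏ s ∈ range k, (1 - C (q ^ s) * X 0 - C (q ^ s) * X 1)) := by
  rw [triBP, smul_eq_C_mul]
  ring

lemma triBP_mem_restrictTotalDegree (q : ℝ) {n i j k : ℕ} (h : i + j + k = n) :
    triBP q n i j k ∈ restrictTotalDegree (Fin 2) ℝ n := by
  rw [mem_restrictTotalDegree, triBP_eq_smul]
  refine (totalDegree_smul_le _ _).trans <| (totalDegree_mul _ _).trans ?_
  have hX : (X 0 ^ i * X 1 ^ j : MvPolynomial (Fin 2) ℝ).totalDegree ≤ i + j :=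
    (totalDegree_mul _ _).trans (add_le_add (totalDegree_X_pow _ _).le (totalDegree_X_pow _ _).le)
  have := totalDegree_prod_one_sub_C_mul_X_le (fun s => q ^ s) k
  omega

theorem span_triBP {q : ℝ} (hq : 0 < q) (n : ℕ) :
    Submodule.span ℝ (Set.range fun p : simplex n => triBP q n p.1.1 p.1.2.1 p.1.2.2) =
      restrictTotalDegree (Fin 2) ℝ n := by
  refine le_antisymm (Submodule.span_le.mpr ?_) ?_
  · rintro _ ⟨⟨⟨i, j, k⟩, hp⟩, rfl⟩
    exact triBP_mem_restrictTotalDegree q (mem_simplex.mp hp)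
  refine restrictTotalDegree_le_of_monomial_mul_mem
    (fun μ => ∏ s ∈ range (n - μ.degree), (1 - C (q ^ s) * X 0 - C (q ^ s) * X 1))
    (fun μ => constantCoeff_prod_one_sub_C_mul_X _ _)
    (fun μ hμ => by
      have := totalDegree_prod_one_sub_C_mul_X_le (fun s => q ^ s) (n - μ.degree)
      omega)
    (fun μ hμ => ?_)
  rw [Finsupp.degree_fin_two] at hμ ⊢
  have hc : qBinom q n (n - (μ 0 + μ 1)) * (μ 0 + μ 1).choose (μ 0) ≠ 0 :=
    (mul_pos (qBinom_pos hq (Nat.sub_le _ _)) (mod_cast Nat.choose_pos le_self_add)).ne'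
  rw [monomial_one_fin_two, ← inv_smul_smul₀ hc (_ * _), ← triBP_eq_smul]
  exact Submodule.smul_mem _ _
    (Submodule.subset_span ⟨⟨(μ 0, μ 1, _), mem_simplex.mpr (by omega)⟩, rfl⟩)

noncomputable def simplexEquivDegreeLE (n : ℕ) : simplex n ≃ {μ : Fin 2 →₀ ℕ | μ.degree ≤ n} where
  toFun p := ⟨Finsupp.single 0 p.1.1 + Finsupp.single 1 p.1.2.1, by
    obtain ⟨⟨i, j, k⟩, hp⟩ := p
    have := mem_simplex.mp hp
    simp only [Set.mem_ofPred_eq, map_add, Finsupp.degree_single]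
    omega⟩
  invFun μ := ⟨(μ.1 0, μ.1 1, n - μ.1.degree), mem_simplex.mpr <| by
    have := μ.2
    simp only [Set.mem_ofPred_eq, Finsupp.degree_fin_two] at this ⊢
    omega⟩
  left_inv := by
    rintro ⟨⟨i, j, k⟩, hp⟩
    have := mem_simplex.mp hp
    ext <;> simp; omega
  right_inv := by
    rintro ⟨μ, hμ⟩
    ext a
    fin_cases a <;> simp

theorem finrank_restrictTotalDegree_fin_two (K : Type*) [Field K] (n : ℕ) :
    Module.finrank K (restrictTotalDegree (Fin 2) K n) = Fintype.card (simplex n) :=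
  Module.finrank_eq_card_basis
    ((basisRestrictSupport K _).reindex (simplexEquivDegreeLE n).symm)

theorem stmt7_general (q : ℝ) (hq0 : 0 < q) (n : ℕ) :
    LinearIndependent ℝ (fun p : simplex n => triBP q n p.1.1 p.1.2.1 p.1.2.2) ∧
    Submodule.span ℝ (Set.range (fun p : simplex n => triBP q n p.1.1 p.1.2.1 p.1.2.2)) =
      MvPolynomial.restrictTotalDegree (Fin 2) ℝ n := by
  have hspan := span_triBP hq0 n
  refine ⟨linearIndependent_iff_card_eq_finrank_span.mpr ?_, hspan⟩
  rw [Set.finrank, hspan, finrank_restrictTotalDegree_fin_two]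

/-- the triangular q-Bernstein polynomials of degree n form a basis of the
    space of bivariate polynomials of total degree at most n: they are linearly
    independent and their span is that space. -/
theorem stmt7 (q : ℝ) (hq0 : 0 < q) (hq1 : q ≤ 1) (n : ℕ) :
    LinearIndependent ℝ (fun p : simplex n => triBP q n p.1.1 p.1.2.1 p.1.2.2) ∧
    Submodule.span ℝ (Set.range (fun p : simplex n => triBP q n p.1.1 p.1.2.1 p.1.2.2)) =
      MvPolynomial.restrictTotalDegree (Fin 2) ℝ n :=
  stmt7_general q hq0 n
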